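/- arXiv:1311.3546 — 3 statements merged into one kernel-verified Lean document; each statement's English description precedes it below -/
import Mathlib

section
/- Let (K, δ) be a differential field with field of constants C, and let (M, d_M) and (N, d_N) be finite-dimensional differential modules over (K, δ). Let M^Δ ⊆ Hom_K(M, K) and N^Δ ⊆ Hom_K(N, K) denote the C-vector spaces of horizontal dual vectors, and equip M ⊗_K N with the differential module structure d determined by d(a ⊗ b) = d_M(a) ⊗ b + a ⊗ d_N(b). Then the C-bilinear map M^Δ × N^Δ → (M ⊗_K N)^Δ sending (v, w) to the functional φ(v, w) determined by φ(v, w)(a ⊗ b) = v(a)·w(b) induces an injective C-linear map M^Δ ⊗_C N^Δ → (M ⊗_K N)^Δ. -/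
/-!
A `K`-linear relation `∑ rᵢ • wᵢ = 0` among horizontal functionals can be differentiated:
horizontality of the `wᵢ` turns it into `∑ δ rᵢ • wᵢ = 0`. Normalising one coefficient to `1`
makes the derived relation shorter, so by induction on its length every relation has constant
coefficients; hence `C`-linearly independent horizontal functionals are `K`-linearly independent.
Writing an element of `M^Δ ⊗[C] N^Δ` as `∑ vᵢ ⊗ eᵢ` over a `C`-basis `(eᵢ)` of `N^Δ`, its image
sends `a ⊗ b` to `∑ vᵢ a * eᵢ b`; if this vanishes, `K`-independence of the `eᵢ` forces
every `vᵢ a = 0`.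
-/

open TensorProduct

/-- The field of constants `C = {r ∈ K : δ r = 0}` of a differential field `(K, δ)`. -/
def constants {K : Type*} [Field K] (δ : K → K)
    (hadd : ∀ a b, δ (a + b) = δ a + δ b)
    (hmul : ∀ a b, δ (a * b) = a * δ b + b * δ a) : Subfield K where
  carrier := {r | δ r = 0}
  zero_mem' := by
    have h := hadd 0 0
    rw [add_zero] at h
    exact (left_eq_add.mp h)
  one_mem' := by
    have h := hmul 1 1
    rw [mul_one, one_mul] at h
    exact (left_eq_add.mp h)
  add_mem' := by
    intro a b ha hb
    simp only [Set.mem_setOf_eq] at *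
    rw [hadd, ha, hb, add_zero]
  neg_mem' := by
    intro a ha
    simp only [Set.mem_setOf_eq] at *
    have h0 : δ 0 = 0 := by
      have h := hadd 0 0; rw [add_zero] at h; exact (left_eq_add.mp h)
    have h := hadd a (-a)
    rw [add_neg_cancel, h0, ha, zero_add] at h
    exact h.symm
  mul_mem' := by
    intro a b ha hb
    simp only [Set.mem_setOf_eq] at *
    rw [hmul, ha, hb, mul_zero, mul_zero, add_zero]
  inv_mem' := by
    intro a ha
    simp only [Set.mem_setOf_eq] at *
    rcases eq_or_ne a 0 with rfl | hne
    · rw [inv_zero]; exact ha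
    · have h0 : δ 1 = 0 := by
        have h := hmul 1 1; rw [mul_one, one_mul] at h; exact (left_eq_add.mp h)
      have h := hmul a a⁻¹
      rw [mul_inv_cancel₀ hne, h0, ha, mul_zero, add_zero] at h
      rcases mul_eq_zero.mp h.symm with h' | h'
      · exact absurd h' hne
      · exact h'

/-- The `C`-vector space `M^Δ` of horizontal dual vectors of a differential module
`(M, d)`: those `K`-linear functionals `v : M → K` with `Dv = 0`, i.e.
`δ (v a) = v (d a)` for all `a`. -/
def horizontalDual {K M : Type*} [Field K] [AddCommGroup M] [Module K M]
    (δ : K → K)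
    (hδadd : ∀ a b : K, δ (a + b) = δ a + δ b)
    (hδmul : ∀ a b : K, δ (a * b) = a * δ b + b * δ a)
    (d : M → M) : Submodule (constants δ hδadd hδmul) (M →ₗ[K] K) where
  carrier := {v | ∀ a : M, δ (v a) = v (d a)}
  zero_mem' := by
    intro a
    have h := hδadd 0 0
    rw [add_zero] at h
    simp [left_eq_add.mp h]
  add_mem' := by
    intro v w hv hw a
    simp only [Set.mem_setOf_eq] at *
    rw [LinearMap.add_apply, LinearMap.add_apply, hδadd, hv, hw]
  smul_mem' := by
    intro c v hv a
    simp only [Set.mem_setOf_eq] at *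
    have hc : δ (c : K) = 0 := c.2
    rw [Subring.smul_def, LinearMap.smul_apply, LinearMap.smul_apply,
      smul_eq_mul, smul_eq_mul, hδmul, hc, mul_zero, add_zero, hv]

section DualPairing

variable {K M N : Type*} [Field K] [AddCommGroup M] [Module K M] [AddCommGroup N] [Module K N]

noncomputable def dualPairing (C : Subfield K) :
    (M →ₗ[K] K) →ₗ[C] (N →ₗ[K] K) →ₗ[C] (M ⊗[K] N →ₗ[K] K) :=
  ((TensorProduct.mk K (Module.Dual K M) (Module.Dual K N)).restrictScalars₁₂ C C).compr₂
    ((TensorProduct.dualDistrib K M N).restrictScalars C)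

@[simp]
lemma dualPairing_apply_tmul (C : Subfield K) (v : M →ₗ[K] K) (w : N →ₗ[K] K) (a : M) (b : N) :
    dualPairing C v w (a ⊗ₜ b) = v a * w b :=
  rfl

theorem injective_lift_dualPairing_compl₁₂ {C : Subfield K} {V W ι : Type*}
    [AddCommMonoid V] [Module C V] [AddCommMonoid W] [Module C W]
    {f : V →ₗ[C] M →ₗ[K] K} (hf : Function.Injective f) (g : W →ₗ[C] N →ₗ[K] K)
    (e : Module.Basis ι C W) (he : LinearIndependent K (g ∘ e)) :
    Function.Injective (TensorProduct.lift ((dualPairing C).compl₁₂ f g)) := by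
  let _ := Module.addCommMonoidToAddCommGroup C (M := V)
  rw [injective_iff_map_eq_zero]
  intro x hx
  obtain ⟨c, rfl⟩ := TensorProduct.eq_repr_basis_right e x
  suffices c = 0 by simp [this]
  ext i : 1
  apply hf
  ext a
  have hrel : ∑ j ∈ c.support, f (c j) a • g (e j) = 0 := by
    ext b
    simpa [Finsupp.sum] using congr($hx (a ⊗ₜ b))
  by_cases hi : i ∈ c.support
  · simpa using linearIndependent_iff'.mp he c.support _ hrel i hi
  · simp [Finsupp.notMem_support_iff.mp hi]

end DualPairing

section Horizontal

variable {K M N : Type*} [Field K] [AddCommGroup M] [Module K M] [AddCommGroup N] [Module K N]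
  {δ : K → K} {hδadd : ∀ a b : K, δ (a + b) = δ a + δ b}
  {hδmul : ∀ a b : K, δ (a * b) = a * δ b + b * δ a}

theorem dualPairing_mem_horizontalDual {dM : M → M} {dN : N → N} {d : M ⊗[K] N → M ⊗[K] N}
    (hdadd : ∀ s t : M ⊗[K] N, d (s + t) = d s + d t)
    (hdtmul : ∀ (a : M) (b : N), d (a ⊗ₜ[K] b) = dM a ⊗ₜ[K] b + a ⊗ₜ[K] dN b)
    {v : M →ₗ[K] K} (hv : v ∈ horizontalDual δ hδadd hδmul dM)
    {w : N →ₗ[K] K} (hw : w ∈ horizontalDual δ hδadd hδmul dN) :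
    dualPairing (constants δ hδadd hδmul) v w ∈ horizontalDual δ hδadd hδmul d := by
  intro t
  induction t using TensorProduct.induction_on with
  | zero =>
    have hd0 : d 0 = 0 := (AddMonoidHom.mk' d hdadd).map_zero
    rw [hd0, map_zero]
    exact (constants δ hδadd hδmul).zero_mem
  | tmul a b =>
    rw [hdtmul, map_add, dualPairing_apply_tmul, dualPairing_apply_tmul, dualPairing_apply_tmul,
      hδmul, hv a, hw b]
    ring
  | add s t hs ht => rw [map_add, hδadd, hs, ht, hdadd, map_add]

variable {dN : N → N} {ι : Type*} {w : ι → horizontalDual δ hδadd hδmul dN}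

theorem sum_deriv_smul_eq_zero {s : Finset ι} {r : ι → K}
    (hr : ∑ i ∈ s, r i • (w i : N →ₗ[K] K) = 0) :
    ∑ i ∈ s, δ (r i) • (w i : N →ₗ[K] K) = 0 := by
  ext b
  have hrel (b : N) : ∑ i ∈ s, r i * (w i : N →ₗ[K] K) b = 0 := by simpa using congr($hr b)
  have hδ0 : δ 0 = 0 := (constants δ hδadd hδmul).zero_mem
  have hderiv : ∑ i ∈ s, δ (r i * (w i : N →ₗ[K] K) b) = 0 := by
    rw [← hδ0, ← hrel b]
    exact (map_sum (AddMonoidHom.mk' δ hδadd) _ s).symm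
  simp only [hδmul, (w _).2 b, Finset.sum_add_distrib, hrel, zero_add] at hderiv
  simpa [mul_comm] using hderiv

theorem eq_zero_of_sum_smul_eq_zero_of_deriv_eq_zero
    (hw : LinearIndependent (constants δ hδadd hδmul) w) {s : Finset ι} {r : ι → K}
    (hδr : ∀ i ∈ s, δ (r i) = 0)
    (hr : ∑ i ∈ s, r i • (w i : N →ₗ[K] K) = 0) : ∀ i ∈ s, r i = 0 := by
  classical
  let c (i : ι) : constants δ hδadd hδmul := if h : δ (r i) = 0 then ⟨r i, h⟩ else 0
  have hc : ∀ i ∈ s, (c i : K) = r i := fun i hi ↦ by simp only [c, dif_pos (hδr i hi)]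
  have hcrel : ∑ i ∈ s, c i • w i = 0 := by
    apply Subtype.ext
    rw [Submodule.coe_sum, ZeroMemClass.coe_zero, ← hr]
    refine Finset.sum_congr rfl fun i hi ↦ ?_
    rw [SetLike.val_smul, Subring.smul_def, hc i hi]
  intro i hi
  rw [← hc i hi, linearIndependent_iff'ₛ.mp hw s c 0 (by simpa using hcrel) i hi]
  rfl

theorem linearIndependent_coe_horizontalDual
    (hw : LinearIndependent (constants δ hδadd hδmul) w) :
    LinearIndependent K fun i ↦ (w i : N →ₗ[K] K) := by
  classical
  rw [linearIndependent_iff']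
  intro s
  induction s using Finset.strongInduction with
  | H s ih =>
  intro r hr j hj
  by_contra hrj
  let q (i : ι) : K := (r j)⁻¹ * r i
  have hq : ∑ i ∈ s, q i • (w i : N →ₗ[K] K) = 0 := by
    simp only [q, mul_smul, ← Finset.smul_sum, hr, smul_zero]
  have hqj : q j = 1 := inv_mul_cancel₀ hrj
  have hδqj : δ (q j) = 0 := hqj ▸ (constants δ hδadd hδmul).one_mem
  have hδq : ∑ i ∈ s.erase j, δ (q i) • (w i : N →ₗ[K] K) = 0 := by
    rw [Finset.sum_erase _ (by rw [hδqj, zero_smul])]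
    exact sum_deriv_smul_eq_zero hq
  have hδq_const : ∀ i ∈ s, δ (q i) = 0 := fun i hi ↦ by
    rcases eq_or_ne i j with rfl | hij
    · exact hδqj
    · exact ih _ (Finset.erase_ssubset hj) _ hδq i (Finset.mem_erase.mpr ⟨hij, hi⟩)
  exact one_ne_zero (hqj ▸ eq_zero_of_sum_smul_eq_zero_of_deriv_eq_zero hw hδq_const hq j hj)

end Horizontal

theorem horizontalDual_tensor_map_injective_general
    {K M N : Type*} [Field K]
    [AddCommGroup M] [Module K M]
    [AddCommGroup N] [Module K N]
    (δ : K → K)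
    (hδadd : ∀ a b : K, δ (a + b) = δ a + δ b)
    (hδmul : ∀ a b : K, δ (a * b) = a * δ b + b * δ a)
    (dM : M → M)
    (dN : N → N)
    (d : M ⊗[K] N → M ⊗[K] N)
    (hdadd : ∀ s t : M ⊗[K] N, d (s + t) = d s + d t)
    (hdtmul : ∀ (a : M) (b : N), d (a ⊗ₜ[K] b) = dM a ⊗ₜ[K] b + a ⊗ₜ[K] dN b) :
    ∃ Φ : (horizontalDual δ hδadd hδmul dM) ⊗[constants δ hδadd hδmul]
            (horizontalDual δ hδadd hδmul dN) →ₗ[constants δ hδadd hδmul]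
          (horizontalDual δ hδadd hδmul d),
      (∀ (v : horizontalDual δ hδadd hδmul dM) (w : horizontalDual δ hδadd hδmul dN)
         (a : M) (b : N),
        (Φ (v ⊗ₜ w) : M ⊗[K] N →ₗ[K] K) (a ⊗ₜ[K] b) = (v : M →ₗ[K] K) a * (w : N →ₗ[K] K) b) ∧
      Function.Injective Φ := by
  let φ := TensorProduct.lift ((dualPairing (constants δ hδadd hδmul)).compl₁₂
    (horizontalDual δ hδadd hδmul dM).subtype (horizontalDual δ hδadd hδmul dN).subtype)
  have hφ (x) : φ x ∈ horizontalDual δ hδadd hδmul d := by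
    induction x using TensorProduct.induction_on with
    | zero => rw [map_zero]; exact zero_mem _
    | tmul v w => exact dualPairing_mem_horizontalDual hdadd hdtmul v.2 w.2
    | add x y hx hy => rw [map_add]; exact add_mem hx hy
  let e := Module.Basis.ofVectorSpace (constants δ hδadd hδmul) (horizontalDual δ hδadd hδmul dN)
  have hφ_inj : Function.Injective φ :=
    injective_lift_dualPairing_compl₁₂ (Submodule.injective_subtype _) _ e
      (linearIndependent_coe_horizontalDual e.linearIndependent)
  exact ⟨φ.codRestrict _ hφ, fun _ _ _ _ ↦ rfl, fun x y hxy ↦ hφ_inj congr($hxy.1)⟩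

/-- Let `(K, δ)` be a differential field with field of constants `C`, and
let `(M, d_M)` and `(N, d_N)` be finite-dimensional differential modules over `(K, δ)`.
Let `M^Δ ⊆ Hom_K(M, K)` and `N^Δ ⊆ Hom_K(N, K)` denote the `C`-vector spaces of
horizontal dual vectors, and equip `M ⊗[K] N` with the differential module structure `d`
determined by `d (a ⊗ b) = d_M a ⊗ b + a ⊗ d_N b`. Then the `C`-bilinear map
`M^Δ × N^Δ → (M ⊗[K] N)^Δ` sending `(v, w)` to the functional `φ(v, w)` determined by
`φ(v, w)(a ⊗ b) = v a * w b` induces an injective `C`-linear map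
`M^Δ ⊗[C] N^Δ → (M ⊗[K] N)^Δ`. -/
theorem horizontalDual_tensor_map_injective
    {K M N : Type*} [Field K] [CharZero K]
    [AddCommGroup M] [Module K M] [FiniteDimensional K M]
    [AddCommGroup N] [Module K N] [FiniteDimensional K N]
    (δ : K → K)
    (hδadd : ∀ a b : K, δ (a + b) = δ a + δ b)
    (hδmul : ∀ a b : K, δ (a * b) = a * δ b + b * δ a)
    (dM : M → M)
    (hdMadd : ∀ a b : M, dM (a + b) = dM a + dM b)
    (hdMsmul : ∀ (r : K) (a : M), dM (r • a) = δ r • a + r • dM a)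
    (dN : N → N)
    (hdNadd : ∀ a b : N, dN (a + b) = dN a + dN b)
    (hdNsmul : ∀ (r : K) (b : N), dN (r • b) = δ r • b + r • dN b)
    (d : M ⊗[K] N → M ⊗[K] N)
    (hdadd : ∀ s t : M ⊗[K] N, d (s + t) = d s + d t)
    (hdtmul : ∀ (a : M) (b : N), d (a ⊗ₜ[K] b) = dM a ⊗ₜ[K] b + a ⊗ₜ[K] dN b) :
    ∃ Φ : (horizontalDual δ hδadd hδmul dM) ⊗[constants δ hδadd hδmul]
            (horizontalDual δ hδadd hδmul dN) →ₗ[constants δ hδadd hδmul]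
          (horizontalDual δ hδadd hδmul d),
      (∀ (v : horizontalDual δ hδadd hδmul dM) (w : horizontalDual δ hδadd hδmul dN)
         (a : M) (b : N),
        (Φ (v ⊗ₜ w) : M ⊗[K] N →ₗ[K] K) (a ⊗ₜ[K] b) = (v : M →ₗ[K] K) a * (w : N →ₗ[K] K) b) ∧
      Function.Injective Φ :=
  horizontalDual_tensor_map_injective_general δ hδadd hδmul dM dN d hdadd hdtmul
end

section
/- Let (K, δ) be a differential field with field of constants C, and let (M, d_M) and (N, d_N) be finite-dimensional differential modules over (K, δ). Let M^Δ, N^Δ denote the C-vector spaces of horizontal dual vectors, and equip M ⊗_K N with the differential module structure d determined by d(a ⊗ b) = d_M(a) ⊗ b + a ⊗ d_N(b). Assume that dim_C M^Δ = dim_K M and dim_C N^Δ = dim_K N (as holds when K is differentially closed). Then the C-linear map M^Δ ⊗_C N^Δ → (M ⊗_K N)^Δ induced by (v, w) ↦ φ(v, w), where φ(v, w)(a ⊗ b) = v(a)·w(b), is a C-linear isomorphism; in particular, the C-linear span of {φ(v, w) : v ∈ M^Δ, w ∈ N^Δ} equals (M ⊗_K N)^Δ. -/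
open TensorProduct

/-!
Horizontal functionals that are linearly independent over `C` stay linearly independent over
`K`: if `u = ∑ gᵢ uᵢ` with all `uᵢ` and `u` horizontal and the `uᵢ` independent over `K`, then
applying `δ` gives `∑ δ(gᵢ) uᵢ = 0`, so the `gᵢ` are constants. Hence, under the dimension
hypotheses, `C`-bases of `M^Δ` and `N^Δ` are `K`-bases of the duals, their products `φ(vᵢ, wⱼ)`
form a `K`-basis of `(M ⊗ N)^*` of horizontal functionals, and by the same computation a
functional is horizontal exactly when its coordinates in this basis are constants.
-/

open Module

section HorizontalDual

variable {K : Type*} [Field K] {δ : K → K} {hδadd : ∀ a b : K, δ (a + b) = δ a + δ b}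
  {hδmul : ∀ a b : K, δ (a * b) = a * δ b + b * δ a}
  {M : Type*} [AddCommGroup M] [Module K M] {d : M → M}

theorem delta_sum_smul_apply {ι : Type*} [Fintype ι] {u : ι → (M →ₗ[K] K)}
    (hu : ∀ i, u i ∈ horizontalDual δ hδadd hδmul d) (g : ι → K) (a : M) :
    δ ((∑ i, g i • u i) a) = (∑ i, δ (g i) • u i) a + (∑ i, g i • u i) (d a) := by
  simp only [LinearMap.sum_apply, LinearMap.smul_apply, smul_eq_mul]
  change AddMonoidHom.mk' δ hδadd _ = _
  rw [map_sum, ← Finset.sum_add_distrib]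
  refine Finset.sum_congr rfl fun i _ => ?_
  rw [AddMonoidHom.mk'_apply, hδmul, hu i a]
  ring

theorem delta_eq_zero_of_sum_smul_mem_horizontalDual {ι : Type*} [Fintype ι]
    {u : ι → (M →ₗ[K] K)} (hu : ∀ i, u i ∈ horizontalDual δ hδadd hδmul d)
    (hli : LinearIndependent K u) {g : ι → K}
    (hg : ∑ i, g i • u i ∈ horizontalDual δ hδadd hδmul d) (i : ι) : δ (g i) = 0 := by
  have hδg : ∑ i, δ (g i) • u i = 0 := LinearMap.ext fun a => by
    have h := delta_sum_smul_apply hu g a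
    rwa [hg a, right_eq_add] at h
  exact Fintype.linearIndependent_iff.mp hli _ hδg i

theorem linearIndependent_of_linearIndependent_constants {ι : Type*} {u : ι → (M →ₗ[K] K)}
    (hu : ∀ i, u i ∈ horizontalDual δ hδadd hδmul d)
    (hli : LinearIndependent (constants δ hδadd hδmul) u) : LinearIndependent K u := by
  classical
  refine linearIndependent_iff_finset_linearIndependent.mpr fun s => ?_
  induction s using Finset.induction_on with
  | empty => exact linearIndependent_empty_type
  | insert a s has ih =>
    change LinearIndepOn K u ↑(insert a s)
    rw [Finset.coe_insert]
    refine LinearIndepOn.insert ih fun hspan => hli.notMem_span_image has ?_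
    obtain ⟨c, hc⟩ := (Submodule.mem_span_image_finset_iff_exists_fun K).mp hspan
    have hconst := delta_eq_zero_of_sum_smul_mem_horizontalDual (u := fun i : s => u i)
      (fun i => hu i) ih (hc ▸ hu a)
    exact (Submodule.mem_span_image_finset_iff_exists_fun (constants δ hδadd hδmul)).mpr
      ⟨fun i => ⟨c i, hconst i⟩, hc⟩

theorem linearIndependent_coe_horizontalDual_s6 {ι : Type*}
    {v : ι → horizontalDual δ hδadd hδmul d}
    (hv : LinearIndependent (constants δ hδadd hδmul) v) :
    LinearIndependent K (fun i => (v i : M →ₗ[K] K)) := by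
  have hv' : LinearIndependent (constants δ hδadd hδmul) (fun i => (v i : M →ₗ[K] K)) :=
    hv.map_injOn (horizontalDual δ hδadd hδmul d).subtype (Submodule.injective_subtype _).injOn
  exact linearIndependent_of_linearIndependent_constants (fun i => (v i).2) hv'

instance finiteDimensional_horizontalDual [FiniteDimensional K M] :
    FiniteDimensional (constants δ hδadd hδmul) (horizontalDual δ hδadd hδmul d) := by
  have hbound : ∀ s : Finset (horizontalDual δ hδadd hδmul d),
      LinearIndependent (constants δ hδadd hδmul)
        (fun i : s => (i : horizontalDual δ hδadd hδmul d)) →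
      s.card ≤ finrank K (M →ₗ[K] K) := fun s hs => by
    simpa using (linearIndependent_coe_horizontalDual_s6 hs).fintype_card_le_finrank
  exact (IsNoetherian.iff_fg (K := constants δ hδadd hδmul)
    (V := horizontalDual δ hδadd hδmul d)).mp <|
    (IsNoetherian.iff_rank_lt_aleph0 (K := constants δ hδadd hδmul)
      (V := horizontalDual δ hδadd hδmul d)).mpr <|
    (rank_le hbound).trans_lt Cardinal.natCast_lt_aleph0

theorem horizontalDual_eq_span_range {ι : Type*} [Fintype ι] (B : Basis ι K (M →ₗ[K] K))
    (hB : ∀ i, B i ∈ horizontalDual δ hδadd hδmul d) :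
    horizontalDual δ hδadd hδmul d = Submodule.span (constants δ hδadd hδmul) (Set.range B) := by
  refine le_antisymm (fun f hf => ?_) (Submodule.span_le.mpr (Set.range_subset_iff.mpr hB))
  rw [← B.sum_repr f] at hf ⊢
  have hconst := delta_eq_zero_of_sum_smul_mem_horizontalDual hB B.linearIndependent hf
  exact (Submodule.mem_span_range_iff_exists_fun _).mpr ⟨fun i => ⟨B.repr f i, hconst i⟩, rfl⟩

noncomputable def horizontalDualBasis {ι : Type*} [Fintype ι] (B : Basis ι K (M →ₗ[K] K))
    (hB : ∀ i, B i ∈ horizontalDual δ hδadd hδmul d) :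
    Basis ι (constants δ hδadd hδmul) (horizontalDual δ hδadd hδmul d) :=
  (Basis.span (B.linearIndependent.restrict_scalars' (constants δ hδadd hδmul))).map
    (LinearEquiv.ofEq _ _ (horizontalDual_eq_span_range B hB).symm)

@[simp]
theorem horizontalDualBasis_apply {ι : Type*} [Fintype ι] (B : Basis ι K (M →ₗ[K] K))
    (hB : ∀ i, B i ∈ horizontalDual δ hδadd hδmul d) (i : ι) :
    (horizontalDualBasis B hB i : (M →ₗ[K] K)) = B i := by
  simp [horizontalDualBasis, Basis.span_apply]

noncomputable def dualBasisOfHorizontalDualBasis [FiniteDimensional K M] {ι : Type*}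
    [Fintype ι]
    (b : Basis ι (constants δ hδadd hδmul) (horizontalDual δ hδadd hδmul d))
    (hcard : Fintype.card ι = finrank K M) : Basis ι K (M →ₗ[K] K) :=
  let hli : LinearIndependent K (fun i => (b i : (M →ₗ[K] K))) :=
    linearIndependent_coe_horizontalDual_s6 b.linearIndependent
  Basis.mk hli
    (hli.span_eq_top_of_card_eq_finrank' (hcard.trans Subspace.dual_finrank_eq.symm)).ge

@[simp]
theorem dualBasisOfHorizontalDualBasis_apply [FiniteDimensional K M] {ι : Type*} [Fintype ι]
    (b : Basis ι (constants δ hδadd hδmul) (horizontalDual δ hδadd hδmul d))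
    (hcard : Fintype.card ι = finrank K M) (i : ι) :
    dualBasisOfHorizontalDualBasis b hcard i = b i := by
  simp [dualBasisOfHorizontalDualBasis]

end HorizontalDual

section DualTensorProduct

variable {R M N ι κ : Type*} [CommRing R] [AddCommGroup M] [Module R M] [Module.Free R M]
  [Module.Finite R M] [AddCommGroup N] [Module R N] [Module.Free R N] [Module.Finite R N]

noncomputable def dualTensorProductBasis (b : Basis ι R (M →ₗ[R] R))
    (c : Basis κ R (N →ₗ[R] R)) : Basis (ι × κ) R (M ⊗[R] N →ₗ[R] R) :=
  (b.tensorProduct c).map (dualDistribEquiv R M N)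

@[simp]
theorem dualTensorProductBasis_apply (b : Basis ι R (M →ₗ[R] R)) (c : Basis κ R (N →ₗ[R] R))
    (p : ι × κ) : dualTensorProductBasis b c p = dualDistrib R M N (b p.1 ⊗ₜ c p.2) := by
  simp only [dualTensorProductBasis, Basis.map_apply, Basis.tensorProduct_apply']
  rfl

end DualTensorProduct

section TensorProduct

variable {K : Type*} [Field K] {δ : K → K} {hδadd : ∀ a b : K, δ (a + b) = δ a + δ b}
  {hδmul : ∀ a b : K, δ (a * b) = a * δ b + b * δ a}
  {M N : Type*} [AddCommGroup M] [Module K M] [AddCommGroup N] [Module K N]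
  {dM : M → M} {dN : N → N} {d : M ⊗[K] N → M ⊗[K] N}
  (hdadd : ∀ s t : M ⊗[K] N, d (s + t) = d s + d t)
  (hdtmul : ∀ (a : M) (b : N), d (a ⊗ₜ[K] b) = dM a ⊗ₜ[K] b + a ⊗ₜ[K] dN b)

include hdadd hdtmul in
theorem dualDistrib_tmul_mem_horizontalDual {v : M →ₗ[K] K} {w : N →ₗ[K] K}
    (hv : v ∈ horizontalDual δ hδadd hδmul dM) (hw : w ∈ horizontalDual δ hδadd hδmul dN) :
    dualDistrib K M N (v ⊗ₜ w) ∈ horizontalDual δ hδadd hδmul d := by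
  intro t
  induction t using TensorProduct.induction_on with
  | zero =>
    rw [show d 0 = 0 by simpa using hdadd 0 0, map_zero]
    simpa using hδadd 0 0
  | tmul a b =>
    rw [hdtmul, map_add, dualDistrib_apply, dualDistrib_apply, dualDistrib_apply, hδmul,
      hv a, hw b]
    ring
  | add s t hs ht => rw [hdadd, map_add, map_add, hδadd, hs, ht]

noncomputable def horizontalDualTensorMap :
    horizontalDual δ hδadd hδmul dM ⊗[constants δ hδadd hδmul]
      horizontalDual δ hδadd hδmul dN →ₗ[constants δ hδadd hδmul]
        horizontalDual δ hδadd hδmul d :=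
  TensorProduct.lift <| LinearMap.mk₂ _
    (fun v w => ⟨dualDistrib K M N ((v : M →ₗ[K] K) ⊗ₜ (w : N →ₗ[K] K)),
      dualDistrib_tmul_mem_horizontalDual hdadd hdtmul v.2 w.2⟩)
    (fun v v' w => Subtype.ext <| by simp [add_tmul])
    (fun c v w => Subtype.ext <| by simp [Subfield.smul_def, ← smul_tmul'])
    (fun v w w' => Subtype.ext <| by simp [tmul_add])
    (fun c v w => Subtype.ext <| by simp [Subfield.smul_def, tmul_smul])

@[simp]
theorem horizontalDualTensorMap_tmul (v : horizontalDual δ hδadd hδmul dM)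
    (w : horizontalDual δ hδadd hδmul dN) :
    (horizontalDualTensorMap hdadd hdtmul (v ⊗ₜ w) : M ⊗[K] N →ₗ[K] K) =
      dualDistrib K M N ((v : M →ₗ[K] K) ⊗ₜ (w : N →ₗ[K] K)) :=
  rfl

end TensorProduct

theorem horizontalDual_tensor_map_bijective_general
    {K M N : Type*} [Field K]
    [AddCommGroup M] [Module K M] [FiniteDimensional K M]
    [AddCommGroup N] [Module K N] [FiniteDimensional K N]
    (δ : K → K)
    (hδadd : ∀ a b : K, δ (a + b) = δ a + δ b)
    (hδmul : ∀ a b : K, δ (a * b) = a * δ b + b * δ a)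
    (dM : M → M)
    (dN : N → N)
    (d : M ⊗[K] N → M ⊗[K] N)
    (hdadd : ∀ s t : M ⊗[K] N, d (s + t) = d s + d t)
    (hdtmul : ∀ (a : M) (b : N), d (a ⊗ₜ[K] b) = dM a ⊗ₜ[K] b + a ⊗ₜ[K] dN b)
    (hdimM : Module.finrank (constants δ hδadd hδmul) (horizontalDual δ hδadd hδmul dM)
      = Module.finrank K M)
    (hdimN : Module.finrank (constants δ hδadd hδmul) (horizontalDual δ hδadd hδmul dN)
      = Module.finrank K N) :
    (∃ Φ : (horizontalDual δ hδadd hδmul dM) ⊗[constants δ hδadd hδmul]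
             (horizontalDual δ hδadd hδmul dN) →ₗ[constants δ hδadd hδmul]
           (horizontalDual δ hδadd hδmul d),
      (∀ (v : horizontalDual δ hδadd hδmul dM) (w : horizontalDual δ hδadd hδmul dN)
         (a : M) (b : N),
        (Φ (v ⊗ₜ w) : M ⊗[K] N →ₗ[K] K) (a ⊗ₜ[K] b)
          = (v : M →ₗ[K] K) a * (w : N →ₗ[K] K) b) ∧
      Function.Bijective Φ) ∧
    Submodule.span (constants δ hδadd hδmul)
      {f : M ⊗[K] N →ₗ[K] K |
        ∃ v ∈ horizontalDual δ hδadd hδmul dM, ∃ w ∈ horizontalDual δ hδadd hδmul dN,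
          ∀ (a : M) (b : N), f (a ⊗ₜ[K] b) = v a * w b}
      = horizontalDual δ hδadd hδmul d := by
  have := Module.Free.of_divisionRing (constants δ hδadd hδmul)
    (horizontalDual δ hδadd hδmul dM)
  have := Module.Free.of_divisionRing (constants δ hδadd hδmul)
    (horizontalDual δ hδadd hδmul dN)
  let bM := finBasisOfFinrankEq _ _ hdimM
  let bN := finBasisOfFinrankEq _ _ hdimN
  let B := dualTensorProductBasis (dualBasisOfHorizontalDualBasis bM (Fintype.card_fin _))
    (dualBasisOfHorizontalDualBasis bN (Fintype.card_fin _))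
  have hB : ∀ p, B p ∈ horizontalDual δ hδadd hδmul d := fun p => by
    simpa [B] using dualDistrib_tmul_mem_horizontalDual hdadd hdtmul (bM p.1).2 (bN p.2).2
  have hΦ : horizontalDualTensorMap hdadd hdtmul =
      ((bM.tensorProduct bN).equiv (horizontalDualBasis B hB) (Equiv.refl _)).toLinearMap :=
    (bM.tensorProduct bN).ext fun p => Subtype.ext <| by
      rw [LinearEquiv.coe_coe, Basis.equiv_apply]
      simp [B, Basis.tensorProduct_apply']
  refine ⟨⟨horizontalDualTensorMap hdadd hdtmul, fun v w a b => rfl, ?_⟩, le_antisymm ?_ ?_⟩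
  · rw [hΦ]
    exact LinearEquiv.bijective _
  · refine Submodule.span_le.mpr fun f ⟨v, hv, w, hw, hf⟩ => ?_
    rw [show f = dualDistrib K M N (v ⊗ₜ w) from TensorProduct.ext' hf]
    exact dualDistrib_tmul_mem_horizontalDual hdadd hdtmul hv hw
  · rw [horizontalDual_eq_span_range B hB]
    refine Submodule.span_mono <| Set.range_subset_iff.mpr fun p => ?_
    exact ⟨bM p.1, (bM p.1).2, bN p.2, (bN p.2).2, fun a b => by simp [B]⟩

/-- Let `(K, δ)` be a differential field with field of constants `C`, and
let `(M, d_M)` and `(N, d_N)` be finite-dimensional differential modules over `(K, δ)`.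
Let `M^Δ, N^Δ` denote the `C`-vector spaces of horizontal dual vectors, and equip
`M ⊗[K] N` with the differential module structure `d` determined by
`d (a ⊗ b) = d_M a ⊗ b + a ⊗ d_N b`. Assume `dim_C M^Δ = dim_K M` and
`dim_C N^Δ = dim_K N` (as holds when `K` is differentially closed). Then the `C`-linear
map `M^Δ ⊗[C] N^Δ → (M ⊗[K] N)^Δ` induced by `(v, w) ↦ φ(v, w)`, where
`φ(v, w)(a ⊗ b) = v a * w b`, is a `C`-linear isomorphism; in particular, the `C`-linear
span of `{φ(v, w) : v ∈ M^Δ, w ∈ N^Δ}` equals `(M ⊗[K] N)^Δ`. -/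
theorem horizontalDual_tensor_map_bijective
    {K M N : Type*} [Field K] [CharZero K]
    [AddCommGroup M] [Module K M] [FiniteDimensional K M]
    [AddCommGroup N] [Module K N] [FiniteDimensional K N]
    (δ : K → K)
    (hδadd : ∀ a b : K, δ (a + b) = δ a + δ b)
    (hδmul : ∀ a b : K, δ (a * b) = a * δ b + b * δ a)
    (dM : M → M)
    (hdMadd : ∀ a b : M, dM (a + b) = dM a + dM b)
    (hdMsmul : ∀ (r : K) (a : M), dM (r • a) = δ r • a + r • dM a)
    (dN : N → N)
    (hdNadd : ∀ a b : N, dN (a + b) = dN a + dN b)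
    (hdNsmul : ∀ (r : K) (b : N), dN (r • b) = δ r • b + r • dN b)
    (d : M ⊗[K] N → M ⊗[K] N)
    (hdadd : ∀ s t : M ⊗[K] N, d (s + t) = d s + d t)
    (hdtmul : ∀ (a : M) (b : N), d (a ⊗ₜ[K] b) = dM a ⊗ₜ[K] b + a ⊗ₜ[K] dN b)
    (hdimM : Module.finrank (constants δ hδadd hδmul) (horizontalDual δ hδadd hδmul dM)
      = Module.finrank K M)
    (hdimN : Module.finrank (constants δ hδadd hδmul) (horizontalDual δ hδadd hδmul dN)
      = Module.finrank K N) :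
    (∃ Φ : (horizontalDual δ hδadd hδmul dM) ⊗[constants δ hδadd hδmul]
             (horizontalDual δ hδadd hδmul dN) →ₗ[constants δ hδadd hδmul]
           (horizontalDual δ hδadd hδmul d),
      (∀ (v : horizontalDual δ hδadd hδmul dM) (w : horizontalDual δ hδadd hδmul dN)
         (a : M) (b : N),
        (Φ (v ⊗ₜ w) : M ⊗[K] N →ₗ[K] K) (a ⊗ₜ[K] b)
          = (v : M →ₗ[K] K) a * (w : N →ₗ[K] K) b) ∧
      Function.Bijective Φ) ∧
    Submodule.span (constants δ hδadd hδmul)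
      {f : M ⊗[K] N →ₗ[K] K |
        ∃ v ∈ horizontalDual δ hδadd hδmul dM, ∃ w ∈ horizontalDual δ hδadd hδmul dN,
          ∀ (a : M) (b : N), f (a ⊗ₜ[K] b) = v a * w b}
      = horizontalDual δ hδadd hδmul d :=
  horizontalDual_tensor_map_bijective_general δ hδadd hδmul dM dN d hdadd hdtmul hdimM hdimN
end

section
/- Let (K, δ) be a differential field and let L ⊆ K be a differential subfield (a subfield closed under δ). Let c, d ∈ K be constants (δ(c) = 0 and δ(d) = 0) that are algebraically independent over L. Then there do not exist polynomials P, Q ∈ L[X, Y] such that Q(c, d) ≠ 0, the element a := P(c, d)/Q(c, d) is nonzero, and δ(a) = d·a. -/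
/-!
Apply `δ` to the coefficients of a polynomial to get a map `D` on `K[X, Y]`. It keeps
coefficients in `L`, and since `c` and `d` are constants, `δ (S(c, d)) = (D S)(c, d)`. If
`a = P(c, d) / Q(c, d)` satisfies `δ a = d a`, then `Q·DP - P·DQ - Y·P·Q` has coefficients in
`L` and vanishes at `(c, d)`, so it is zero. Comparing `Y`-degrees rules this out: `Y·P·Q` has
`Y`-degree `deg_Y P + deg_Y Q + 1`, and `D` does not raise `Y`-degree.
-/

open MvPolynomial

namespace MvPolynomial

variable {σ R : Type*} [CommRing R]

theorem mem_range_map_subtype_iff {S : Subring R} {p : MvPolynomial σ R} :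
    p ∈ (map S.subtype).range ↔ ∀ m, p.coeff m ∈ S := by
  rw [RingHom.mem_range, ← Set.mem_range, mem_range_map_iff_coeffs_subset, Subring.coe_subtype,
    Subtype.range_coe]
  refine ⟨fun h m => ?_, fun h a ha => ?_⟩
  · by_cases hm : p.coeff m = 0
    · rw [hm]; exact S.zero_mem
    · exact h (coeff_mem_coeffs m hm)
  · obtain ⟨m, -, rfl⟩ := mem_coeffs_iff.1 ha
    exact h m

theorem X_mul_mul_ne_mul_sub_mul [IsDomain R] (j : σ) {P Q A B : MvPolynomial σ R}
    (hP : P ≠ 0) (hQ : Q ≠ 0) (hA : degreeOf j A ≤ degreeOf j P)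
    (hB : degreeOf j B ≤ degreeOf j Q) :
    X j * (P * Q) ≠ Q * A - P * B := by
  classical
  intro h
  have hlhs : degreeOf j (X j * (P * Q)) = 1 + (degreeOf j P + degreeOf j Q) := by
    rw [degreeOf_mul_eq (X_ne_zero j) (mul_ne_zero hP hQ), degreeOf_mul_eq hP hQ, degreeOf_X,
      if_pos rfl]
  have hrhs : degreeOf j (Q * A - P * B) ≤ degreeOf j P + degreeOf j Q :=
    (degreeOf_sub_le j _ _).trans <| max_le
      ((degreeOf_mul_le j _ _).trans (by omega)) ((degreeOf_mul_le j _ _).trans (by omega))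
  rw [← h, hlhs] at hrhs
  omega

end MvPolynomial

namespace Derivation

variable {k : Type*} [CommRing k]

section MvPolynomial

variable {A σ : Type*} [CommRing A] [Algebra k A] (D : Derivation k A A)

noncomputable def mvMapCoeffs (p : MvPolynomial σ A) : MvPolynomial σ A :=
  AddMonoidAlgebra.map (D : A →ₗ[k] A).toAddMonoidHom p

@[simp]
theorem coeff_mvMapCoeffs (p : MvPolynomial σ A) (m : σ →₀ ℕ) :
    (D.mvMapCoeffs p).coeff m = D (p.coeff m) :=
  coeff_addMonoidAlgebraMap _ p m

theorem mvMapCoeffs_add (p q : MvPolynomial σ A) :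
    D.mvMapCoeffs (p + q) = D.mvMapCoeffs p + D.mvMapCoeffs q := by
  ext m; simp

theorem mvMapCoeffs_monomial (s : σ →₀ ℕ) (a : A) :
    D.mvMapCoeffs (monomial s a) = monomial s (D a) := by
  classical
  ext m; simp [coeff_monomial, apply_ite D]

theorem degreeOf_mvMapCoeffs_le (i : σ) (p : MvPolynomial σ A) :
    degreeOf i (D.mvMapCoeffs p) ≤ degreeOf i p := by
  refine degreeOf_le_iff.2 fun m hm => monomial_le_degreeOf i ?_
  rw [mem_support_iff] at hm ⊢
  exact fun h => hm (by rw [coeff_mvMapCoeffs, h, D.map_zero])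

theorem mvMapCoeffs_mem_range_map_subtype {L : Subring A} (hL : ∀ a ∈ L, D a ∈ L)
    {p : MvPolynomial σ A} (hp : p ∈ (map L.subtype).range) :
    D.mvMapCoeffs p ∈ (map L.subtype).range :=
  mem_range_map_subtype_iff.2 fun m =>
    (D.coeff_mvMapCoeffs p m).symm ▸ hL _ (mem_range_map_subtype_iff.1 hp m)

theorem apply_eval_eq_eval_mvMapCoeffs {x : σ → A} (hx : ∀ i, D (x i) = 0)
    (p : MvPolynomial σ A) : D (eval x p) = eval x (D.mvMapCoeffs p) := by
  induction p using MvPolynomial.induction_on' with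
  | monomial s a =>
    have hmono : D (s.prod fun i e => x i ^ e) = 0 :=
      eqOn_adjoin (D2 := 0) (s := Set.range x) (fun _ ⟨i, hi⟩ => hi ▸ hx i) <|
        Subalgebra.prod_mem _ fun i _ =>
          Subalgebra.pow_mem _ (Algebra.subset_adjoin (Set.mem_range_self i)) _
    rw [mvMapCoeffs_monomial, eval_monomial, eval_monomial, leibniz, hmono, smul_zero, zero_add,
      smul_eq_mul, mul_comm]
  | add p q hp hq => rw [map_add, D.map_add, hp, hq, mvMapCoeffs_add, map_add]

end MvPolynomial

section Field

variable {K : Type*} [Field K] [Algebra k K] (D : Derivation k K K)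

theorem apply_div_eq_mul_div_iff {p q e : K} (hq : q ≠ 0) :
    D (p / q) = e * (p / q) ↔ q * D p - p * D q = e * (p * q) := by
  rw [leibniz_div, smul_eq_mul, smul_eq_mul, smul_eq_mul]
  field_simp

theorem apply_eval_div_ne_mul {σ : Type*} (L : Subring K) (hL : ∀ a ∈ L, D a ∈ L)
    {x : σ → K} (hx : ∀ i, D (x i) = 0)
    (halg : ∀ S : MvPolynomial σ K, (∀ m, S.coeff m ∈ L) → eval x S = 0 → S = 0)
    (j : σ) {P Q : MvPolynomial σ K} (hP : ∀ m, P.coeff m ∈ L) (hQ : ∀ m, Q.coeff m ∈ L)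
    (hPx : eval x P ≠ 0) (hQx : eval x Q ≠ 0) :
    D (eval x P / eval x Q) ≠ x j * (eval x P / eval x Q) := by
  intro h
  rw [D.apply_div_eq_mul_div_iff hQx, D.apply_eval_eq_eval_mvMapCoeffs hx,
    D.apply_eval_eq_eval_mvMapCoeffs hx] at h
  have hpoly : Q * D.mvMapCoeffs P - P * D.mvMapCoeffs Q - X j * (P * Q) = 0 := by
    refine halg _ (mem_range_map_subtype_iff.1 ?_) ?_
    · rw [← mem_range_map_subtype_iff] at hP hQ
      exact sub_mem (sub_mem (mul_mem hQ (D.mvMapCoeffs_mem_range_map_subtype hL hP))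
        (mul_mem hP (D.mvMapCoeffs_mem_range_map_subtype hL hQ)))
        (mul_mem ⟨X j, map_X _ _⟩ (mul_mem hP hQ))
    · simp only [map_sub, map_mul, eval_X]
      linear_combination h
  exact X_mul_mul_ne_mul_sub_mul j (fun h => hPx (by rw [h, map_zero]))
    (fun h => hQx (by rw [h, map_zero])) (D.degreeOf_mvMapCoeffs_le j P)
    (D.degreeOf_mvMapCoeffs_le j Q) (sub_eq_zero.1 hpoly).symm

end Field

end Derivation

theorem no_rational_logarithmic_antiderivative_general
    {K : Type*} [Field K]
    (δ : K → K)
    (hδadd : ∀ a b : K, δ (a + b) = δ a + δ b)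
    (hδmul : ∀ a b : K, δ (a * b) = a * δ b + b * δ a)
    (L : Subfield K) (hL : ∀ x ∈ L, δ x ∈ L)
    (c d : K) (hc : δ c = 0) (hd : δ d = 0)
    (halg : ∀ S : MvPolynomial (Fin 2) K,
      (∀ m : Fin 2 →₀ ℕ, S.coeff m ∈ L) → MvPolynomial.eval ![c, d] S = 0 → S = 0) :
    ¬ ∃ P Q : MvPolynomial (Fin 2) K,
        (∀ m : Fin 2 →₀ ℕ, P.coeff m ∈ L) ∧
        (∀ m : Fin 2 →₀ ℕ, Q.coeff m ∈ L) ∧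
        MvPolynomial.eval ![c, d] Q ≠ 0 ∧
        MvPolynomial.eval ![c, d] P / MvPolynomial.eval ![c, d] Q ≠ 0 ∧
        δ (MvPolynomial.eval ![c, d] P / MvPolynomial.eval ![c, d] Q)
          = d * (MvPolynomial.eval ![c, d] P / MvPolynomial.eval ![c, d] Q) := by
  rintro ⟨P, Q, hP, hQ, hQx, hdiv, hlog⟩
  let D : Derivation ℤ K K := .mk' (AddMonoidHom.mk' δ hδadd).toIntLinearMap hδmul
  have hx : ∀ i, D (![c, d] i) = 0 := Fin.forall_fin_two.2 ⟨hc, hd⟩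
  exact D.apply_eval_div_ne_mul L.toSubring hL hx halg 1 hP hQ (div_ne_zero_iff.1 hdiv).1 hQx hlog

/-- Let `(K, δ)` be a differential field and let `L ⊆ K` be a
differential subfield (a subfield closed under `δ`). Let `c, d ∈ K` be constants
(`δ c = 0` and `δ d = 0`) that are algebraically independent over `L`. Then there do not
exist polynomials `P, Q ∈ L[X, Y]` such that `Q(c, d) ≠ 0`, the element
`a := P(c, d) / Q(c, d)` is nonzero, and `δ a = d * a`. (Polynomials over `L` are
realized as polynomials in `MvPolynomial (Fin 2) K` all of whose coefficients lie
in `L`.) -/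
theorem no_rational_logarithmic_antiderivative
    {K : Type*} [Field K] [CharZero K]
    (δ : K → K)
    (hδadd : ∀ a b : K, δ (a + b) = δ a + δ b)
    (hδmul : ∀ a b : K, δ (a * b) = a * δ b + b * δ a)
    (L : Subfield K) (hL : ∀ x ∈ L, δ x ∈ L)
    (c d : K) (hc : δ c = 0) (hd : δ d = 0)
    (halg : ∀ S : MvPolynomial (Fin 2) K,
      (∀ m : Fin 2 →₀ ℕ, S.coeff m ∈ L) → MvPolynomial.eval ![c, d] S = 0 → S = 0) :
    ¬ ∃ P Q : MvPolynomial (Fin 2) K,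
        (∀ m : Fin 2 →₀ ℕ, P.coeff m ∈ L) ∧
        (∀ m : Fin 2 →₀ ℕ, Q.coeff m ∈ L) ∧
        MvPolynomial.eval ![c, d] Q ≠ 0 ∧
        MvPolynomial.eval ![c, d] P / MvPolynomial.eval ![c, d] Q ≠ 0 ∧
        δ (MvPolynomial.eval ![c, d] P / MvPolynomial.eval ![c, d] Q)
          = d * (MvPolynomial.eval ![c, d] P / MvPolynomial.eval ![c, d] Q) :=
  no_rational_logarithmic_antiderivative_general δ hδadd hδmul L hL c d hc hd halg
end
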